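/- Let ξ ∈ H with ξ ≠ 0 and a = Real.sqrt (1 + ‖ξ‖²). The bounded operator S on H defined by S x = x + ⟨x,ξ⟩·ξ is a positive invertible operator, and if H is infinite-dimensional then its spectrum is spectrum ℂ S = {a², 1} = {1 + ‖ξ‖², 1}. -/

import Mathlib

open scoped InnerProductSpace

/-!
Write `S = 1 + P` with `P = rankOne ξ ξ`. Since `P² = ‖ξ‖² P`, the spectral mapping theorem for
the polynomial `X² - ‖ξ‖² X` gives `σ(P) ⊆ {0, ‖ξ‖²}`, hence `σ(S) ⊆ {1, 1 + ‖ξ‖²}`, which misses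
`0`. Conversely `ξ` is an eigenvector of `P` for `‖ξ‖²`, and `P`, having rank one, cannot be
surjective on an infinite-dimensional space, so `0 ∈ σ(P)`.
-/

open Polynomial in
theorem spectrum_subset_of_mul_self_eq_smul {𝕜 A : Type*} [Field 𝕜] [Ring A] [Algebra 𝕜 A]
    {p : A} {n : 𝕜} (hp : p * p = n • p) : spectrum 𝕜 p ⊆ {0, n} := by
  nontriviality A
  refine Set.image_subset_iff.mp (spectrum.subset_polynomial_aeval p (X ^ 2 - C n * X)) |>.trans
    fun μ hμ => ?_
  have hμ' : μ * (μ - n) = 0 := by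
    simpa [pow_two p, hp, Algebra.smul_def, mul_sub, sq, mul_comm n] using hμ
  rcases mul_eq_zero.mp hμ' with h | h
  · exact .inl h
  · exact .inr (sub_eq_zero.mp h)

theorem spectrum_one_add_eq_image {R A : Type*} [CommRing R] [Ring A] [Algebra R A] (a : A) :
    spectrum R (1 + a) = (1 + ·) '' spectrum R a := by
  rw [← map_one (algebraMap R A), ← spectrum.singleton_add_eq, Set.singleton_add]

theorem ContinuousLinearMap.mem_spectrum_of_apply_eq_smul {𝕜 E : Type*}
    [NontriviallyNormedField 𝕜] [NormedAddCommGroup E] [NormedSpace 𝕜 E]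
    {T : E →L[𝕜] E} {μ : 𝕜} {x : E} (hx : x ≠ 0) (hTx : T x = μ • x) : μ ∈ spectrum 𝕜 T := by
  intro hu
  have hinj := (Module.End.isUnit_iff _).mp (hu.map toLinearMapRingHom) |>.injective
  exact hx <| hinj (by simp [hTx])

namespace InnerProductSpace

variable {𝕜 E : Type*} [RCLike 𝕜] [NormedAddCommGroup E] [InnerProductSpace 𝕜 E]

theorem rankOne_self_mul_self (x : E) :
    rankOne 𝕜 x x * rankOne 𝕜 x x = ((‖x‖ ^ 2 : ℝ) : 𝕜) • rankOne 𝕜 x x := by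
  simp [ContinuousLinearMap.mul_def, rankOne_comp_rankOne, inner_self_eq_norm_sq_to_K]

theorem norm_sq_mem_spectrum_rankOne_self {x : E} (hx : x ≠ 0) :
    ((‖x‖ ^ 2 : ℝ) : 𝕜) ∈ spectrum 𝕜 (rankOne 𝕜 x x) :=
  ContinuousLinearMap.mem_spectrum_of_apply_eq_smul hx (by simp [inner_self_eq_norm_sq_to_K])

theorem zero_mem_spectrum_rankOne (hE : ¬ FiniteDimensional 𝕜 E) (x y : E) :
    0 ∈ spectrum 𝕜 (rankOne 𝕜 x y) := by
  rw [spectrum.zero_mem_iff]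
  rintro ⟨u, hu⟩
  have hsurj : Function.Surjective (rankOne 𝕜 x y) := fun z =>
    ⟨(↑u⁻¹ : E →L[𝕜] E) z, by rw [← hu]; exact congr($(u.mul_inv) z)⟩
  rw [rankOne_def', ContinuousLinearMap.coe_comp] at hsurj
  exact hE (Module.Finite.of_surjective (LinearMap.toSpanSingleton 𝕜 E x) hsurj.of_comp)

theorem spectrum_one_add_rankOne_self_subset (x : E) :
    spectrum 𝕜 (1 + rankOne 𝕜 x x) ⊆ {((1 + ‖x‖ ^ 2 : ℝ) : 𝕜), 1} := by
  rw [spectrum_one_add_eq_image]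
  refine (Set.image_mono (spectrum_subset_of_mul_self_eq_smul (rankOne_self_mul_self x))).trans ?_
  simp [Set.image_insert_eq, Set.pair_comm]

theorem spectrum_one_add_rankOne_self (hE : ¬ FiniteDimensional 𝕜 E) {x : E} (hx : x ≠ 0) :
    spectrum 𝕜 (1 + rankOne 𝕜 x x) = {((1 + ‖x‖ ^ 2 : ℝ) : 𝕜), 1} := by
  refine (spectrum_one_add_rankOne_self_subset x).antisymm ?_
  rw [spectrum_one_add_eq_image, Set.insert_subset_iff, Set.singleton_subset_iff]
  exact ⟨⟨_, norm_sq_mem_spectrum_rankOne_self hx, by push_cast; rfl⟩,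
    ⟨0, zero_mem_spectrum_rankOne hE x x, add_zero 1⟩⟩

theorem isUnit_one_add_rankOne_self (x : E) : IsUnit (1 + rankOne 𝕜 x x) := by
  rw [← spectrum.zero_notMem_iff 𝕜]
  intro h0
  have hpos : (0 : ℝ) < 1 + ‖x‖ ^ 2 := by positivity
  rcases spectrum_one_add_rankOne_self_subset x h0 with h | h
  · exact hpos.ne' (RCLike.ofReal_eq_zero.mp h.symm)
  · exact zero_ne_one h

end InnerProductSpace

theorem stmt1 {H : Type*} [NormedAddCommGroup H] [InnerProductSpace ℂ H]
    (ξ : H) (hξ : ξ ≠ 0) (a : ℝ) (ha : a = Real.sqrt (1 + ‖ξ‖ ^ 2))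
    (S : H →L[ℂ] H) (hS : ∀ x : H, S x = x + ⟪ξ, x⟫_ℂ • ξ) :
    S.IsPositive ∧ IsUnit S ∧
      (¬ FiniteDimensional ℂ H →
        spectrum ℂ S = {((a : ℂ) ^ 2), 1} ∧
          spectrum ℂ S = {((1 + ‖ξ‖ ^ 2 : ℝ) : ℂ), 1}) := by
  have hS : S = 1 + InnerProductSpace.rankOne ℂ ξ ξ := by
    ext x
    simp [hS]
  have ha : (a : ℂ) ^ 2 = ((1 + ‖ξ‖ ^ 2 : ℝ) : ℂ) := by
    rw [ha]
    norm_cast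
    exact Real.sq_sqrt (by positivity)
  subst hS
  refine ⟨ContinuousLinearMap.isPositive_one.add (InnerProductSpace.isPositive_rankOne_self ξ),
    InnerProductSpace.isUnit_one_add_rankOne_self ξ, fun hH => ?_⟩
  rw [InnerProductSpace.spectrum_one_add_rankOne_self hH hξ, ha]
  exact ⟨rfl, rfl⟩
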